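/- Let H = 4P_1+P_2 (four isolated vertices together with one edge). For every black-and-white labelling ℓ of H, the bipartite complement of H with respect to ℓ contains an induced subgraph isomorphic to the cycle C_4 or an induced subgraph isomorphic to the star K_{1,4}; in particular, this bipartite complement does not belong to the class S. -/

import Mathlib

open SimpleGraph

/-- `B` is the black colour class of a black-and-white labelling of `H`:
every edge of `H` joins a vertex of `B` to a vertex outside `B`
(equivalently, `B` and its complement `Bᶜ` are both independent sets,
i.e. `(B, Bᶜ)` is a bipartition of `H` into two possibly empty independent sets). -/
def IsBWLabelling {V : Type*} (H : SimpleGraph V) (B : Set V) : Prop :=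
  ∀ ⦃u v : V⦄, H.Adj u v → (u ∈ B ↔ v ∉ B)

/-- `H` with black class `BH` is a labelled induced subgraph of `G` with black class `BG`:
there is an injective map preserving both adjacency and non-adjacency which maps
black vertices to black vertices and white vertices to white vertices. -/
def LabelledIndSubgraph {VH VG : Type*} (H : SimpleGraph VH) (BH : Set VH)
    (G : SimpleGraph VG) (BG : Set VG) : Prop :=
  ∃ f : VH → VG, Function.Injective f ∧
    (∀ u v : VH, H.Adj u v ↔ G.Adj (f u) (f v)) ∧
    (∀ u : VH, u ∈ BH ↔ f u ∈ BG)

/-- `G` is strongly `H^ℓ`-free, where `BH` is the black class of the labelling `ℓ`: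
there is no bipartition `(BG, BGᶜ)` of `G` such that `H^ℓ` is a labelled induced
subgraph of `(BG, BGᶜ, E_G)`. -/
def StronglyFree {VG VH : Type*} (G : SimpleGraph VG) (H : SimpleGraph VH)
    (BH : Set VH) : Prop :=
  ¬ ∃ BG : Set VG, IsBWLabelling G BG ∧ LabelledIndSubgraph H BH G BG

/-- `G` is weakly `H^ℓ`-free, where `BH` is the black class of the labelling `ℓ`:
it is not the case that `H^ℓ` is a labelled induced subgraph of `(BG, BGᶜ, E_G)`
for every bipartition `(BG, BGᶜ)` of `G`. -/
def WeaklyFree {VG VH : Type*} (G : SimpleGraph VG) (H : SimpleGraph VH)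
    (BH : Set VH) : Prop :=
  ¬ ∀ BG : Set VG, IsBWLabelling G BG → LabelledIndSubgraph H BH G BG

/-- `G` is `H`-free: `G` contains no induced subgraph isomorphic to `H`. -/
def HFree {VG VH : Type*} (G : SimpleGraph VG) (H : SimpleGraph VH) : Prop :=
  ¬ ∃ f : VH → VG, Function.Injective f ∧ ∀ u v : VH, H.Adj u v ↔ G.Adj (f u) (f v)

/-- The bipartite complement of `H` with respect to the black-and-white labelling
with black class `B`: a black vertex and a white vertex are adjacent if and only if
they are non-adjacent in `H`, and no two vertices of the same colour are adjacent. -/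
def bipComplement {V : Type*} (H : SimpleGraph V) (B : Set V) : SimpleGraph V :=
  SimpleGraph.fromRel (fun u v => u ∈ B ∧ v ∉ B ∧ ¬ H.Adj u v)

/-- The subdivided claw `S_{h,i,j}` (for `1 ≤ h ≤ i ≤ j`): the tree with one centre
vertex `0` of degree `3` and three paths attached to it, with leaves at distance
`h`, `i` and `j` from the centre. The vertices of the three paths are
`1, …, h`, `h+1, …, h+i` and `h+i+1, …, h+i+j`, respectively. -/
def subdividedClaw (h i j : ℕ) : SimpleGraph (Fin (h + i + j + 1)) :=
  SimpleGraph.fromRel (fun a b =>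
    (a.val = 0 ∧ (b.val = 1 ∨ b.val = h + 1 ∨ b.val = h + i + 1)) ∨
    (1 ≤ a.val ∧ b.val = a.val + 1 ∧
      (b.val ≤ h ∨ (h + 1 ≤ a.val ∧ b.val ≤ h + i) ∨
        (h + i + 1 ≤ a.val ∧ b.val ≤ h + i + j))))

/-- `H` belongs to the class `S`: every connected component of `H` is isomorphic
to a path `P_r` for some `r ≥ 1` or to a subdivided claw `S_{h,i,j}` for some
`1 ≤ h ≤ i ≤ j`. -/
def InClassS {V : Type*} (H : SimpleGraph V) : Prop :=
  ∀ c : H.ConnectedComponent,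
    (∃ r : ℕ, 1 ≤ r ∧ Nonempty ((H.induce c.supp) ≃g SimpleGraph.pathGraph r)) ∨
    (∃ h i j : ℕ, 1 ≤ h ∧ h ≤ i ∧ i ≤ j ∧
      Nonempty ((H.induce c.supp) ≃g subdividedClaw h i j))

/-- The graph `4P_1 + P_2`: vertices `0, 1, 2, 3` isolated, edge `45`. -/
def g4P1'P2 : SimpleGraph (Fin 6) := SimpleGraph.fromEdgeSet {s(4, 5)}

/-- The star `K_{1,4}`: centre `0` adjacent to the four leaves `1, 2, 3, 4`. -/
def gK14 : SimpleGraph (Fin 5) :=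
  SimpleGraph.fromEdgeSet {s(0, 1), s(0, 2), s(0, 3), s(0, 4)}

/-! In a bipartite complement, a set of vertices that is independent in `H` induces the complete
bipartite graph between its black and its white vertices. The four isolated vertices of
`4P_1 + P_2`, together with the two ends of its edge (one black and one white), therefore contain
either a vertex with four isolated vertices of the other colour, a `K_{1,4}`, or two black and two
white vertices not using both ends of the edge, a `C_4`. Each component of a graph of `S` is a
subgraph of a tree of maximum degree three, and `C_4` and `K_{1,4}` are connected, so a graph
of `S` contains neither. -/

theorem gK14_eq_starGraph : gK14 = starGraph 0 := by
  ext u v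
  simp only [gK14, fromEdgeSet_adj, Set.mem_insert_iff, Set.mem_singleton_iff, Sym2.eq_iff,
    starGraph_adj]
  fin_cases u <;> fin_cases v <;> decide

section BipComplement

variable {V W : Type*} {H : SimpleGraph V} {B : Set V}

theorem bipComplement_adj {u v : V} :
    (bipComplement H B).Adj u v ↔ (u ∈ B ↔ v ∉ B) ∧ ¬ H.Adj u v := by
  by_cases hu : u ∈ B <;> by_cases hv : v ∈ B <;>
    simp [bipComplement, hu, hv, adj_comm H v u] <;> rintro - rfl <;> contradiction

theorem bipComplement_compl : bipComplement H Bᶜ = bipComplement H B := by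
  ext u v
  simp only [bipComplement_adj, Set.mem_compl_iff]
  tauto

theorem isIndContained_bipComplement {F : SimpleGraph W} {φ : W → V} (hφ : φ.Injective)
    (hF : ∀ u v, F.Adj u v ↔ (φ u ∈ B ↔ φ v ∉ B))
    (hH : ∀ u v, (φ u ∈ B ↔ φ v ∉ B) → ¬ H.Adj (φ u) (φ v)) :
    F ⊴ bipComplement H B :=
  ⟨⟨⟨φ, hφ⟩, fun {u v} => by
    simp only [Function.Embedding.coeFn_mk, bipComplement_adj]
    exact ⟨fun h => (hF u v).2 h.1, fun h => ⟨(hF u v).1 h, hH u v ((hF u v).1 h)⟩⟩⟩⟩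

theorem cycleGraph_four_isIndContained_bipComplement {x₁ x₂ y₁ y₂ : V}
    (hx₁ : x₁ ∈ B) (hx₂ : x₂ ∈ B) (hy₁ : y₁ ∉ B) (hy₂ : y₂ ∉ B) (hx : x₁ ≠ x₂) (hy : y₁ ≠ y₂)
    (h₁₁ : ¬ H.Adj x₁ y₁) (h₁₂ : ¬ H.Adj x₁ y₂) (h₂₁ : ¬ H.Adj x₂ y₁) (h₂₂ : ¬ H.Adj x₂ y₂) :
    cycleGraph 4 ⊴ bipComplement H B := by
  refine isIndContained_bipComplement (φ := ![x₁, y₁, x₂, y₂]) ?_ ?_ ?_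
  · intro u v huv
    fin_cases u <;> fin_cases v <;> simp_all [Ne.symm]
  · intro u v
    fin_cases u <;> fin_cases v <;> simp [hx₁, hx₂, hy₁, hy₂] <;> decide
  · intro u v huv
    fin_cases u <;> fin_cases v <;> simp_all [adj_comm]

theorem gK14_isIndContained_bipComplement {c : V} {l : Fin 4 → V} (hl : l.Injective)
    (hc : c ∈ B) (hlB : ∀ i, l i ∉ B) (hH : ∀ i, ¬ H.Adj c (l i)) :
    gK14 ⊴ bipComplement H B := by
  refine isIndContained_bipComplement (φ := Fin.cons c l) ?_ ?_ ?_
  · exact Fin.cons_injective_iff.2 ⟨fun ⟨i, hi⟩ => hlB i (hi ▸ hc), hl⟩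
  · intro u v
    rw [gK14_eq_starGraph, starGraph_adj]
    cases u using Fin.cases <;> cases v using Fin.cases <;>
      simp [hc, hlB, (Fin.succ_ne_zero _).symm]
  · intro u v huv
    cases u using Fin.cases <;> cases v using Fin.cases <;> simp_all [adj_comm]

theorem cycleGraph_four_or_gK14_isIndContained_bipComplement {I : Fin 4 → V} (hI : I.Injective)
    (hIso : ∀ i v, ¬ H.Adj (I i) v) {b w : V} (hb : b ∈ B) (hw : w ∉ B)
    (hbI : ∀ i, I i ≠ b) (hwI : ∀ i, I i ≠ w) :
    cycleGraph 4 ⊴ bipComplement H B ∨ gK14 ⊴ bipComplement H B := by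
  have hIso' : ∀ i v, ¬ H.Adj v (I i) := fun i v h => hIso i v h.symm
  by_cases hwhite : ∀ i, I i ∉ B
  · exact .inr (gK14_isIndContained_bipComplement hI hb hwhite fun i => hIso' i b)
  by_cases hblack : ∀ i, I i ∈ B
  · rw [← bipComplement_compl]
    exact .inr (gK14_isIndContained_bipComplement hI hw (fun i => not_not.2 (hblack i))
      fun i => hIso' i w)
  push Not at hwhite hblack
  obtain ⟨i, hi⟩ := hwhite
  obtain ⟨j, hj⟩ := hblack
  obtain ⟨k, hki, hkj⟩ := (by decide : ∀ i j : Fin 4, ∃ k, k ≠ i ∧ k ≠ j) i j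
  left
  by_cases hk : I k ∈ B
  · exact cycleGraph_four_isIndContained_bipComplement hi hk hj hw (hI.ne hki.symm) (hwI j)
      (hIso i _) (hIso i _) (hIso k _) (hIso k _)
  · exact cycleGraph_four_isIndContained_bipComplement hi hb hj hk (hbI i) (hI.ne hkj.symm)
      (hIso i _) (hIso i _) (hIso' j _) (hIso' k _)

end BipComplement

-- The path on `ℕ`, except that `h + 1` and `h + i + 1` are joined to `0` instead of to their
-- predecessors: a tree of maximum degree three.
def spider (h i : ℕ) : SimpleGraph ℕ := fromRel fun a b =>
  (b = a + 1 ∧ b ≠ h + 1 ∧ b ≠ h + i + 1) ∨ (a = 0 ∧ (b = h + 1 ∨ b = h + i + 1))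

namespace spider

theorem adj_iff {h i a b : ℕ} : (spider h i).Adj a b ↔
    (b = a + 1 ∧ b ≠ h + 1 ∧ b ≠ h + i + 1) ∨ (a = b + 1 ∧ a ≠ h + 1 ∧ a ≠ h + i + 1) ∨
      (a = 0 ∧ (b = h + 1 ∨ b = h + i + 1)) ∨ (b = 0 ∧ (a = h + 1 ∨ a = h + i + 1)) := by
  simp only [spider, fromRel_adj]
  omega

theorem pathGraph_isContained (r : ℕ) : pathGraph r ⊑ spider 0 0 :=
  ⟨⟨⟨Fin.val, fun {u v} huv => by rw [pathGraph_adj] at huv; rw [adj_iff]; omega⟩,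
    Fin.val_injective⟩⟩

theorem subdividedClaw_isContained (h i j : ℕ) : subdividedClaw h i j ⊑ spider h i :=
  ⟨⟨⟨Fin.val, fun {u v} huv => by
    simp only [subdividedClaw, fromRel_adj] at huv
    rw [adj_iff]; omega⟩, Fin.val_injective⟩⟩

theorem cycleGraph_four_free (h i : ℕ) : (cycleGraph 4).Free (spider h i) := by
  rintro ⟨f⟩
  have hadj : ∀ u v : Fin 4, (cycleGraph 4).Adj u v → (spider h i).Adj (f u) (f v) :=
    fun u v huv => f.toHom.map_adj huv
  have h01 := adj_iff.1 (hadj 0 1 (by decide))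
  have h12 := adj_iff.1 (hadj 1 2 (by decide))
  have h23 := adj_iff.1 (hadj 2 3 (by decide))
  have h30 := adj_iff.1 (hadj 3 0 (by decide))
  have h02 : f 0 ≠ f 2 := f.injective.ne (by decide)
  have h13 : f 1 ≠ f 3 := f.injective.ne (by decide)
  omega

theorem gK14_free (h i : ℕ) : gK14.Free (spider h i) := by
  rintro ⟨f⟩
  have hadj : ∀ v : Fin 4, (spider h i).Adj (f 0) (f v.succ) := fun v =>
    f.toHom.map_adj (by rw [gK14_eq_starGraph, starGraph_adj]; simp [(Fin.succ_ne_zero _).symm])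
  have h1 := adj_iff.1 (hadj 0)
  have h2 := adj_iff.1 (hadj 1)
  have h3 := adj_iff.1 (hadj 2)
  have h4 := adj_iff.1 (hadj 3)
  have hne : ∀ u v : Fin 4, u ≠ v → f u.succ ≠ f v.succ := fun u v huv =>
    f.injective.ne ((Fin.succ_injective _).ne huv)
  have := hne 0 1 (by decide)
  have := hne 0 2 (by decide)
  have := hne 0 3 (by decide)
  have := hne 1 2 (by decide)
  have := hne 1 3 (by decide)
  have := hne 2 3 (by decide)
  omega

end spider

theorem SimpleGraph.Connected.exists_isContained_induce_supp {V W : Type*} {F : SimpleGraph W}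
    {G : SimpleGraph V} (hF : F.Connected) (hFG : F ⊑ G) :
    ∃ c : G.ConnectedComponent, F ⊑ G.induce c.supp := by
  obtain ⟨f⟩ := hFG
  obtain ⟨w⟩ := hF.nonempty
  have hmem : ∀ u, f u ∈ (G.connectedComponentMk (f w)).supp := fun u =>
    ConnectedComponent.sound ((hF.preconnected u w).map f.toHom)
  exact ⟨_, ⟨⟨⟨fun u => ⟨f u, hmem u⟩, fun huv => f.toHom.map_adj huv⟩,
    fun u v huv => f.injective (congrArg Subtype.val huv)⟩⟩⟩

namespace InClassS

variable {V W : Type*} {G : SimpleGraph V}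

theorem exists_isContained_spider (hG : InClassS G) {F : SimpleGraph W} (hF : F.Connected)
    (hFG : F ⊑ G) : ∃ h i, F ⊑ spider h i := by
  obtain ⟨c, hFc⟩ := hF.exists_isContained_induce_supp hFG
  rcases hG c with ⟨r, -, ⟨e⟩⟩ | ⟨h, i, j, -, -, -, ⟨e⟩⟩
  · exact ⟨0, 0, hFc.trans (e.isContained.trans (spider.pathGraph_isContained r))⟩
  · exact ⟨h, i, hFc.trans (e.isContained.trans (spider.subdividedClaw_isContained h i j))⟩

theorem cycleGraph_four_free (hG : InClassS G) : (cycleGraph 4).Free G := fun hC =>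
  let ⟨h, i, hs⟩ := hG.exists_isContained_spider cycleGraph_connected hC
  spider.cycleGraph_four_free h i hs

theorem gK14_free (hG : InClassS G) : gK14.Free G := fun hK =>
  let ⟨h, i, hs⟩ := hG.exists_isContained_spider (gK14_eq_starGraph ▸ connected_starGraph 0) hK
  spider.gK14_free h i hs

end InClassS

theorem g4P1'P2_adj {u v : Fin 6} : g4P1'P2.Adj u v ↔ s(u, v) = s(4, 5) := by
  simp only [g4P1'P2, fromEdgeSet_adj, Set.mem_singleton_iff, and_iff_left_iff_imp]
  rintro h rfl
  rcases Sym2.eq_iff.1 h with ⟨h4, h5⟩ | ⟨h5, h4⟩ <;> exact absurd (h4.symm.trans h5) (by decide)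

theorem g4P1'P2_isolated (i : Fin 4) (v : Fin 6) : ¬ g4P1'P2.Adj (Fin.castLE (by omega) i) v := by
  rw [g4P1'P2_adj, Sym2.eq_iff]
  fin_cases i <;> simp

/-- For every black-and-white labelling of `4P_1 + P_2`, the bipartite complement
of `4P_1 + P_2` with respect to it contains an induced subgraph isomorphic to the
cycle `C_4` or an induced subgraph isomorphic to the star `K_{1,4}`; in particular,
this bipartite complement does not belong to the class `S`. -/
theorem stmt_12 (B : Set (Fin 6)) (hB : IsBWLabelling g4P1'P2 B) :
    (Nonempty (SimpleGraph.cycleGraph 4 ↪g bipComplement g4P1'P2 B) ∨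
      Nonempty (gK14 ↪g bipComplement g4P1'P2 B)) ∧
    ¬ InClassS (bipComplement g4P1'P2 B) := by
  have h45 : (4 : Fin 6) ∈ B ↔ (5 : Fin 6) ∉ B := hB (g4P1'P2_adj.2 rfl)
  have hcontains : cycleGraph 4 ⊴ bipComplement g4P1'P2 B ∨ gK14 ⊴ bipComplement g4P1'P2 B := by
    by_cases h4 : (4 : Fin 6) ∈ B
    · exact cycleGraph_four_or_gK14_isIndContained_bipComplement (Fin.castLE_injective _)
        g4P1'P2_isolated h4 (h45.1 h4) (by decide) (by decide)
    · exact cycleGraph_four_or_gK14_isIndContained_bipComplement (Fin.castLE_injective _)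
        g4P1'P2_isolated (not_not.1 (mt h45.2 h4)) h4 (by decide) (by decide)
  refine ⟨hcontains, fun hS => ?_⟩
  rcases hcontains with hC | hK
  · exact hS.cycleGraph_four_free hC.isContained
  · exact hS.gK14_free hK.isContained
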